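/- Let k ≥ 1, let G be a finite connected simple graph that is (P3+kP2)-free and contains a vertex set A inducing P3+(k-1)P2, and assume that every minimum dominating set of G is a stable set. Let D be a minimum dominating set of G. If there exists a vertex b0 ∈ B ∩ D which has at least two private neighbours in C with respect to D, then |B ∩ D| ≤ k·|A|. -/

import Mathlib

open SimpleGraph

/-- The disjoint union of a path `P₃` and `k` copies of `P₂`. -/
def P3kP2 (k : ℕ) : SimpleGraph (Fin 3 ⊕ Fin k × Fin 2) :=
  SimpleGraph.fromRel fun x y =>
    match x, y with
    | Sum.inl a, Sum.inl b => (b : ℕ) = (a : ℕ) + 1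
    | Sum.inr a, Sum.inr b => a.1 = b.1 ∧ a.2 ≠ b.2
    | _, _ => False

/-- `G` contains no induced subgraph isomorphic to `H`. -/
def HFree {V W : Type*} (G : SimpleGraph V) (H : SimpleGraph W) : Prop :=
  IsEmpty (H ↪g G)

/-- `D` is a dominating set of `G`. -/
def IsDomSet {V : Type*} (G : SimpleGraph V) (D : Set V) : Prop :=
  ∀ v ∉ D, ∃ u ∈ D, G.Adj u v

/-- `D` is a minimum dominating set of `G`. -/
def IsMinDomSet {V : Type*} (G : SimpleGraph V) (D : Set V) : Prop :=
  IsDomSet G D ∧ ∀ D' : Set V, IsDomSet G D' → D.ncard ≤ D'.ncard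

/-- The distance from a vertex `v` to a set `A` of vertices. -/
noncomputable def distToSet {V : Type*} (G : SimpleGraph V) (v : V) (A : Set V) : ℕ :=
  sInf ((G.dist v) '' A)

/-- The set of vertices at distance two from `A` whose open neighbourhood is a clique. -/
def cliqueDistTwo {V : Type*} (G : SimpleGraph V) (A : Set V) : Set V :=
  {v | distToSet G v A = 2 ∧ G.IsClique (G.neighborSet v)}

/-- A vertex `c₁` is regular (w.r.t. `A` and `k`) if `c₁ ∈ 𝒞` and there are `k` further
vertices of `𝒞` such that all `k+1` of them are pairwise at distance at least four. -/
def IsRegularVertex {V : Type*} (G : SimpleGraph V) (k : ℕ) (A : Set V) (c₁ : V) : Prop :=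
  c₁ ∈ cliqueDistTwo G A ∧ ∃ c : Fin k → V, (∀ i, c i ∈ cliqueDistTwo G A) ∧
    (∀ i, 4 ≤ G.dist c₁ (c i)) ∧ ∀ i j, i ≠ j → 4 ≤ G.dist (c i) (c j)

/-- `v` is a private neighbour of `u` with respect to the dominating set `D`:
`N[v] ∩ D = {u}`. -/
def IsPrivateNbr {V : Type*} (G : SimpleGraph V) (D : Set V) (u v : V) : Prop :=
  (insert v (G.neighborSet v)) ∩ D = {u}

/-- A stable (independent) set of vertices. -/
def IsStable {V : Type*} (G : SimpleGraph V) (S : Set V) : Prop :=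
  S.Pairwise fun u v => ¬ G.Adj u v

/-!
Let `C` be the vertices at distance two from `A`, and `I` those vertices of `C \ D` that are not
adjacent to `b₀`. An edge inside `C` would extend `A` to an induced `P₃ + kP₂`, so `C` is
independent, and `D` is stable by hypothesis. Hence among the traces `N(c) ∩ D`, `c ∈ I`, there is
no induced matching of size `k` (with the path `x b₀ y` through the two private neighbours it
would induce `P₃ + kP₂`), and, whenever `c₀, c₁ ∈ I` share a neighbour `s₀ ∈ D`, none of size
`k - 1` avoiding `c₀`, `c₁`, `s₀` (use the path `c₀ s₀ c₁` and the edge `x b₀`). A combinatorial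
induction turns these two conditions into a set `Y` of at most `k (k - 1)` vertices meeting every
trace. Replacing `(B ∩ D) \ {b₀}` by `A ∪ Y` in `D` gives a dominating set containing an edge of
`A`, so it is not minimum and `|B ∩ D| ≤ |A| + |Y| ≤ k |A|`.
-/

section InducedMatching

variable {α β : Type*} {t : α → Set β} {m : ℕ}

def IsInducedMatching (t : α → Set β) (c : Fin m → α) (s : Fin m → β) : Prop :=
  ∀ i j, s j ∈ t (c i) ↔ i = j

namespace IsInducedMatching

variable {c : Fin m → α} {s : Fin m → β}

lemma mem (h : IsInducedMatching t c s) (i : Fin m) : s i ∈ t (c i) := (h i i).2 rfl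

lemma injective_left (h : IsInducedMatching t c s) : Function.Injective c :=
  fun i j hij => ((h j i).1 (hij ▸ h.mem i)).symm

lemma injective_right (h : IsInducedMatching t c s) : Function.Injective s :=
  fun i j hij => ((h j i).1 (hij ▸ h.mem j)).symm

lemma cons (h : IsInducedMatching t c s) {c₀ : α} {s₀ : β} (h₀ : s₀ ∈ t c₀)
    (hc₀ : ∀ i, s i ∉ t c₀) (hs₀ : ∀ i, s₀ ∉ t (c i)) :
    IsInducedMatching t (Fin.cons c₀ c : Fin (m + 1) → α) (Fin.cons s₀ s) := by
  intro i j
  cases i using Fin.cases <;> cases j using Fin.cases <;>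
    simp [h₀, hc₀, hs₀, h _ _, Fin.succ_ne_zero, (Fin.succ_ne_zero _).symm]

lemma of_inter {U : Set β} (h : IsInducedMatching (fun a => t a ∩ U) c s) :
    IsInducedMatching t c s ∧ ∀ i, s i ∈ U :=
  ⟨fun i j => ⟨fun hj => (h i j).1 ⟨hj, (h.mem j).2⟩, fun hij => ((h i j).2 hij).1⟩,
    fun i => (h.mem i).2⟩

end IsInducedMatching

def NoInducedMatching (t : α → Set β) (I : Set α) (m : ℕ) : Prop :=
  ∀ (c : Fin m → α) (s : Fin m → β), (∀ i, c i ∈ I) → ¬ IsInducedMatching t c s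

lemma NoInducedMatching.mono {I J : Set α} (h : NoInducedMatching t I m) (hJI : J ⊆ I) :
    NoInducedMatching t J m :=
  fun c s hc => h c s fun i => hJI (hc i)

lemma not_noInducedMatching_zero {I : Set α} : ¬ NoInducedMatching t I 0 :=
  fun h => h Fin.elim0 Fin.elim0 (fun i => i.elim0) fun i => i.elim0

def NoInducedMatchingAtOverlaps (t : α → Set β) (I : Set α) (m : ℕ) : Prop :=
  ∀ c₀ ∈ I, ∀ c₁ ∈ I, c₀ ≠ c₁ → ∀ s₀ ∈ t c₀ ∩ t c₁,
    NoInducedMatching (fun c => t c ∩ (t c₀ ∪ t c₁)ᶜ) {c ∈ I | s₀ ∉ t c} m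

lemma NoInducedMatchingAtOverlaps.restrict {I : Set α}
    (h : NoInducedMatchingAtOverlaps t I (m + 1)) {c₀ c₁ : α} {s₀ : β} (hc₀ : c₀ ∈ I)
    (hs₀ : s₀ ∈ t c₀) :
    NoInducedMatchingAtOverlaps (fun c => t c ∩ (t c₀ ∪ t c₁)ᶜ) {c ∈ I | s₀ ∉ t c} m := by
  intro d₀ hd₀ d₁ hd₁ hne u₀ hu₀ c s hc hcs
  set U := t c₀ ∪ t c₁
  have hcs' : IsInducedMatching (fun c => t c ∩ (t d₀ ∪ t d₁)ᶜ ∩ Uᶜ) c s := by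
    convert hcs using 2 with a
    ext z
    simp only [Set.mem_inter_iff, Set.mem_compl_iff, Set.mem_union]
    tauto
  obtain ⟨hcs'', hsU⟩ := hcs'.of_inter
  refine h d₀ hd₀.1 d₁ hd₁.1 hne u₀ ⟨hu₀.1.1, hu₀.2.1⟩ (Fin.cons c₀ c) (Fin.cons s₀ s) ?_
    (hcs''.cons ?_ (fun i hi => hsU i (.inl hi.1)) fun i hi => (hc i).1.2 hi.1)
  · intro i
    cases i using Fin.cases
    · exact ⟨hc₀, fun h => hu₀.1.2 (.inl h)⟩
    · exact ⟨(hc _).1.1, fun h => (hc _).2 ⟨h, hu₀.1.2⟩⟩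
  · exact ⟨hs₀, by rintro (h | h); exacts [hd₀.2 h, hd₁.2 h]⟩

lemma exists_injective_fin_of_lt_encard {H : Set α} (h : (m : ℕ∞) < H.encard) :
    ∃ c : Fin (m + 1) → α, Function.Injective c ∧ ∀ i, c i ∈ H := by
  obtain ⟨T, hTH, hT⟩ := Set.exists_subset_encard_eq (Order.add_one_le_of_lt h)
  have : Finite T := (Set.finite_of_encard_eq_coe (k := m + 1) (by simpa using hT)).to_subtype
  have hcard : Nat.card T = m + 1 := by
    rw [Nat.card_coe_set_eq, Set.ncard_def, hT]
    rfl
  let e := Finite.equivFinOfCardEq hcard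
  exact ⟨fun i => e.symm i, Subtype.val_injective.comp e.symm.injective, fun i => hTH (e.symm i).2⟩

lemma exists_finset_hitting_of_pairwiseDisjoint {H : Set α} (hdisj : H.PairwiseDisjoint t)
    (h : NoInducedMatching t H (m + 1)) :
    ∃ Y : Finset β, Y.card ≤ m ∧ ∀ c ∈ H, (t c).Nonempty → ∃ y ∈ Y, y ∈ t c := by
  classical
  rcases isEmpty_or_nonempty β with hβ | hβ
  · exact ⟨∅, by simp, fun c _ ⟨z, _⟩ => isEmptyElim z⟩
  set H₀ := {c ∈ H | (t c).Nonempty}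
  choose! χ hχ using fun c (hc : c ∈ H₀) => hc.2
  have hH₀ : H₀.encard ≤ m := by
    by_contra! hlt
    obtain ⟨c, hc, hcH₀⟩ := exists_injective_fin_of_lt_encard hlt
    refine h c (χ ∘ c) (fun i => (hcH₀ i).1) fun i j =>
      ⟨fun hj => ?_, fun hij => hij ▸ hχ _ (hcH₀ i)⟩
    by_contra hij
    exact Set.disjoint_left.1 (hdisj (hcH₀ j).1 (hcH₀ i).1 (hc.ne (Ne.symm hij))) (hχ _ (hcH₀ j)) hj
  obtain ⟨hfin, hcard⟩ := Set.encard_le_coe_iff_finite_ncard_le.1 hH₀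
  refine ⟨hfin.toFinset.image χ, ?_, fun c hc hne => ⟨χ c, ?_, hχ c ⟨hc, hne⟩⟩⟩
  · exact Finset.card_image_le.trans (by rwa [← Set.ncard_eq_toFinset_card _ hfin])
  · exact Finset.mem_image_of_mem χ (hfin.mem_toFinset.2 ⟨hc, hne⟩)

lemma exists_minimal_overlap [Finite β] {I : Set α} (h : ¬ I.PairwiseDisjoint t) :
    ∃ c₀ ∈ I, ∃ c₁ ∈ I, ∃ s₀ ∈ t c₀ ∩ t c₁, c₀ ≠ c₁ ∧
      {c ∈ I | s₀ ∉ t c ∧ t c ⊆ t c₀ ∪ t c₁}.PairwiseDisjoint t := by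
  obtain ⟨c₀, hc₀, c₁, hc₁, hne, hnd⟩ :
      ∃ c₀ ∈ I, ∃ c₁ ∈ I, c₀ ≠ c₁ ∧ ¬ Disjoint (t c₀) (t c₁) := by
    simpa [Set.PairwiseDisjoint, Set.Pairwise, Function.onFun] using h
  obtain ⟨⟨c₀, c₁⟩, ⟨hc₀, hc₁, hne, hnd⟩, hmin⟩ :=
    (measure fun p : α × α => (t p.1 ∪ t p.2).ncard).wf.has_min
      {p | p.1 ∈ I ∧ p.2 ∈ I ∧ p.1 ≠ p.2 ∧ ¬ Disjoint (t p.1) (t p.2)}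
      ⟨(c₀, c₁), hc₀, hc₁, hne, hnd⟩
  obtain ⟨s₀, hs₀⟩ := Set.not_disjoint_iff_nonempty_inter.1 hnd
  refine ⟨c₀, hc₀, c₁, hc₁, s₀, hs₀, hne, fun d₀ hd₀ d₁ hd₁ hne' => ?_⟩
  by_contra hnd'
  have hsub : t d₀ ∪ t d₁ ⊆ (t c₀ ∪ t c₁) \ {s₀} :=
    Set.union_subset (fun z hz => ⟨hd₀.2.2 hz, fun h => hd₀.2.1 (h ▸ hz)⟩)
      fun z hz => ⟨hd₁.2.2 hz, fun h => hd₁.2.1 (h ▸ hz)⟩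
  exact hmin (d₀, d₁) ⟨hd₀.1, hd₁.1, hne', hnd'⟩
    ((Set.ncard_le_ncard hsub).trans_lt (Set.ncard_sdiff_singleton_lt_of_mem (.inl hs₀.1)))

/- Induct on `k`, using an overlapping pair `c₀, c₁` with `|t c₀ ∪ t c₁|` minimal: `s₀` hits the
traces through it, the other traces inside `t c₀ ∪ t c₁` are pairwise disjoint, and the remaining
traces, cut down to the complement of `t c₀ ∪ t c₁`, satisfy the hypotheses for `k - 1`. -/
theorem exists_finset_hitting [Finite β] {I : Set α} (k : ℕ) (h₁ : NoInducedMatching t I (k + 1))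
    (h₂ : NoInducedMatchingAtOverlaps t I k) :
    ∃ Y : Finset β, Y.card ≤ (k + 1) * k ∧ ∀ c ∈ I, (t c).Nonempty → ∃ y ∈ Y, y ∈ t c := by
  induction k generalizing t I with
  | zero =>
    simpa using exists_finset_hitting_of_pairwiseDisjoint (fun c₀ hc₀ c₁ hc₁ hne =>
      Set.disjoint_left.2 fun s₀ h₀ h₁ =>
        not_noInducedMatching_zero (h₂ c₀ hc₀ c₁ hc₁ hne s₀ ⟨h₀, h₁⟩)) h₁
  | succ m ih =>
    by_cases hdisj : I.PairwiseDisjoint t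
    · obtain ⟨Y, hY, hit⟩ := exists_finset_hitting_of_pairwiseDisjoint hdisj h₁
      exact ⟨Y, hY.trans (by nlinarith), hit⟩
    classical
    obtain ⟨c₀, hc₀, c₁, hc₁, s₀, hs₀, hne, hH⟩ := exists_minimal_overlap hdisj
    obtain ⟨Y₁, hY₁, hit₁⟩ :=
      exists_finset_hitting_of_pairwiseDisjoint hH (h₁.mono fun c hc => hc.1)
    obtain ⟨Y₂, hY₂, hit₂⟩ := ih (h₂ c₀ hc₀ c₁ hc₁ hne s₀ hs₀) (h₂.restrict hc₀ hs₀.1)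
    refine ⟨insert s₀ (Y₁ ∪ Y₂), ?_, fun c hc hne => ?_⟩
    · calc (insert s₀ (Y₁ ∪ Y₂)).card ≤ Y₁.card + Y₂.card + 1 :=
            (Finset.card_insert_le _ _).trans (by grw [Finset.card_union_le])
        _ ≤ (m + 1 + 1) * (m + 1) := by nlinarith
    by_cases hs₀c : s₀ ∈ t c
    · exact ⟨s₀, Finset.mem_insert_self _ _, hs₀c⟩
    by_cases hcU : t c ⊆ t c₀ ∪ t c₁
    · obtain ⟨y, hy, hyc⟩ := hit₁ c ⟨hc, hs₀c, hcU⟩ hne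
      exact ⟨y, by simp [hy], hyc⟩
    · obtain ⟨y, hy, hyc⟩ := hit₂ c ⟨hc, hs₀c⟩ (Set.not_subset.1 hcU)
      exact ⟨y, by simp [hy], hyc.1⟩

end InducedMatching

namespace P3kP2

variable {k : ℕ} {V : Type*} {G : SimpleGraph V}

@[simp]
lemma adj_inl_inl {a b : Fin 3} :
    (P3kP2 k).Adj (.inl a) (.inl b) ↔ (b : ℕ) = a + 1 ∨ (a : ℕ) = b + 1 := by
  simp only [P3kP2, fromRel_adj, ne_eq, Sum.inl.injEq]
  omega

@[simp]
lemma adj_inr_inr {p q : Fin k × Fin 2} :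
    (P3kP2 k).Adj (.inr p) (.inr q) ↔ p.1 = q.1 ∧ p.2 ≠ q.2 := by
  simp only [P3kP2, fromRel_adj, ne_eq, Sum.inr.injEq]
  constructor
  · rintro ⟨-, h | ⟨h₁, h₂⟩⟩
    exacts [h, ⟨h₁.symm, Ne.symm h₂⟩]
  · rintro ⟨h₁, h₂⟩
    exact ⟨fun h => h₂ (h ▸ rfl), .inl ⟨h₁, h₂⟩⟩

@[simp]
lemma not_adj_inl_inr {a : Fin 3} {p : Fin k × Fin 2} : ¬ (P3kP2 k).Adj (.inl a) (.inr p) := by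
  simp [P3kP2]

@[simp]
lemma not_adj_inr_inl {a : Fin 3} {p : Fin k × Fin 2} : ¬ (P3kP2 k).Adj (.inr p) (.inl a) :=
  fun h => not_adj_inl_inr h.symm

lemma nonempty_embedding (φ : Fin 3 ⊕ Fin k × Fin 2 → V)
    (h01 : G.Adj (φ (.inl 0)) (φ (.inl 1))) (h12 : G.Adj (φ (.inl 1)) (φ (.inl 2)))
    (h02 : Gᶜ.Adj (φ (.inl 0)) (φ (.inl 2)))
    (hedge : ∀ i, G.Adj (φ (.inr (i, 0))) (φ (.inr (i, 1))))
    (hpath : ∀ a i j, Gᶜ.Adj (φ (.inl a)) (φ (.inr (i, j))))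
    (hedges : ∀ i i', i ≠ i' → ∀ j j', Gᶜ.Adj (φ (.inr (i, j))) (φ (.inr (i', j')))) :
    Nonempty (P3kP2 k ↪g G) := by
  have hadj : ∀ p q, G.Adj (φ p) (φ q) ↔ (P3kP2 k).Adj p q := by
    rintro (a | ⟨i, j⟩) (b | ⟨i', j'⟩)
    · have h02' := ((G.compl_adj _ _).1 h02).2
      fin_cases a <;> fin_cases b <;> simp [h01, h12, h01.symm, h12.symm, h02', mt G.adj_symm h02']
    · simpa using ((G.compl_adj _ _).1 (hpath a i' j')).2
    · simpa using mt G.adj_symm ((G.compl_adj _ _).1 (hpath b i j)).2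
    · by_cases hi : i = i'
      · subst hi
        fin_cases j <;> fin_cases j' <;> simp [hedge, (hedge _).symm]
      · simpa [hi] using ((G.compl_adj _ _).1 (hedges i i' hi j j')).2
  have hinj : Function.Injective φ := by
    intro p q hpq
    by_contra hne
    have hnadj : ¬ (P3kP2 k).Adj p q := by rw [← hadj, hpq]; exact G.irrefl
    rcases p with a | ⟨i, j⟩ <;> rcases q with b | ⟨i', j'⟩
    · fin_cases a <;> fin_cases b <;> simp_all [h02.ne, h02.ne.symm]
    · exact (hpath a i' j').ne hpq
    · exact (hpath b i j).ne hpq.symm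
    · by_cases hi : i = i'
      · subst hi
        fin_cases j <;> fin_cases j' <;> simp_all
      · exact (hedges i i' hi j j').ne hpq
  exact ⟨⟨⟨φ, hinj⟩, hadj _ _⟩⟩

lemma nonempty_embedding_succ (f : P3kP2 k ↪g G) {u w : V} (huw : G.Adj u w)
    (hu : ∀ z, Gᶜ.Adj (f z) u) (hw : ∀ z, Gᶜ.Adj (f z) w) :
    Nonempty (P3kP2 (k + 1) ↪g G) := by
  have hfc : ∀ p q, Gᶜ.Adj (f p) (f q) ↔ (P3kP2 k)ᶜ.Adj p q := fun _ _ =>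
    (Embedding.complEquiv f).map_adj_iff
  refine nonempty_embedding (Sum.elim (fun a => f (.inl a))
    fun p => Fin.cases (![u, w] p.2) (fun i => f (.inr (i, p.2))) p.1) ?_ ?_ ?_ ?_ ?_ ?_
  · simp
  · simp
  · simp [hfc]
  · intro i
    cases i using Fin.cases <;> simp [huw]
  · intro a i j
    cases i using Fin.cases
    · fin_cases j
      exacts [hu _, hw _]
    · simp [hfc]
  · intro i i' hne j j'
    cases i using Fin.cases <;> cases i' using Fin.cases
    · exact absurd rfl hne
    · fin_cases j <;> simp [(hu _).symm, (hw _).symm]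
    · fin_cases j' <;> simp [hu, hw]
    · simp_all

lemma nonempty_embedding_of_bipartite {X Y : Set V} (hX : G.IsIndepSet X)
    (hY : G.IsIndepSet Y) (hXY : Disjoint X Y) {a a' b : V} {c s : Fin k → V}
    (ha : a ∈ X) (ha' : a' ∈ X) (hb : b ∈ Y) (hc : ∀ i, c i ∈ X) (hs : ∀ i, s i ∈ Y)
    (haa' : a ≠ a') (hab : G.Adj a b) (ha'b : G.Adj a' b) (has : ∀ i, ¬ G.Adj a (s i))
    (ha's : ∀ i, ¬ G.Adj a' (s i)) (hcb : ∀ i, ¬ G.Adj (c i) b)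
    (hcs : IsInducedMatching G.neighborSet c s) :
    Nonempty (P3kP2 k ↪g G) := by
  have hXX {x y} (hx : x ∈ X) (hy : y ∈ X) (hxy : x ≠ y) : Gᶜ.Adj x y := ⟨hxy, hX hx hy hxy⟩
  have hYY {x y} (hx : x ∈ Y) (hy : y ∈ Y) (hxy : x ≠ y) : Gᶜ.Adj x y := ⟨hxy, hY hx hy hxy⟩
  have hXY' {x y} (hx : x ∈ X) (hy : y ∈ Y) (hxy : ¬ G.Adj x y) : Gᶜ.Adj x y :=
    ⟨hXY.ne_of_mem hx hy, hxy⟩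
  refine nonempty_embedding (Sum.elim ![a, b, a'] fun p => ![c p.1, s p.1] p.2)
    hab ha'b.symm (hXX ha ha' haa') hcs.mem ?_ ?_
  · intro v i j
    fin_cases v <;> fin_cases j
    · exact hXX ha (hc i) fun h : a = c i => hcb i (h ▸ hab)
    · exact hXY' ha (hs i) (has i)
    · exact (hXY' (hc i) hb (hcb i)).symm
    · exact hYY hb (hs i) fun h : b = s i => has i (h ▸ hab)
    · exact hXX ha' (hc i) fun h : a' = c i => hcb i (h ▸ ha'b)
    · exact hXY' ha' (hs i) (ha's i)
  · intro i i' hi j j'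
    fin_cases j <;> fin_cases j'
    · exact hXX (hc i) (hc i') (hcs.injective_left.ne hi)
    · exact hXY' (hc i) (hs i') ((hcs i i').not.2 hi)
    · exact (hXY' (hc i') (hs i) ((hcs i' i).not.2 hi.symm)).symm
    · exact hYY (hs i) (hs i') (hcs.injective_right.ne hi)

lemma ncard_range (f : P3kP2 k ↪g G) : (Set.range f).ncard = 2 * k + 3 := by
  rw [Set.ncard_range_of_injective f.injective]
  simp only [Nat.card_eq_fintype_card, Fintype.card_sum, Fintype.card_fin, Fintype.card_prod]
  ring

lemma not_isStable_range (f : P3kP2 k ↪g G) : ¬ IsStable G (Set.range f) :=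
  fun h => h (Set.mem_range_self (.inl 0)) (Set.mem_range_self (.inl 1))
    (by simp [f.injective.eq_iff]) (f.map_adj_iff.2 (by simp))

end P3kP2

section Distance

variable {V : Type*} {G : SimpleGraph V} {A : Set V} {v a : V}

lemma distToSet_le_dist (ha : a ∈ A) : distToSet G v A ≤ G.dist v a :=
  Nat.sInf_le ⟨a, ha, rfl⟩

lemma exists_dist_eq_distToSet (hA : A.Nonempty) : ∃ a ∈ A, G.dist v a = distToSet G v A :=
  Nat.sInf_mem (hA.image _)

lemma compl_adj_of_one_lt_distToSet (h : 1 < distToSet G v A) (ha : a ∈ A) : Gᶜ.Adj a v := by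
  have hle := distToSet_le_dist (G := G) (v := v) ha
  refine ⟨?_, fun hav => ?_⟩
  · rintro rfl
    rw [dist_self] at hle
    omega
  · rw [dist_eq_one_iff_adj.2 hav.symm] at hle
    omega

lemma exists_adj_of_distToSet_eq_one (h : distToSet G v A = 1) : ∃ a ∈ A, G.Adj v a := by
  have hA : A.Nonempty := Set.nonempty_iff_ne_empty.2 <| by
    rintro rfl
    simp [distToSet] at h
  obtain ⟨a, ha, hd⟩ := exists_dist_eq_distToSet (G := G) (v := v) hA
  exact ⟨a, ha, dist_eq_one_iff_adj.1 (hd.trans h)⟩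

lemma distToSet_eq_two (hconn : G.Connected) (hv : ∀ a ∈ A, Gᶜ.Adj a v) {u : V}
    (hvu : G.Adj v u) (hua : G.Adj u a) (ha : a ∈ A) : distToSet G v A = 2 := by
  obtain ⟨a', ha', hd⟩ := exists_dist_eq_distToSet (G := G) (v := v) ⟨a, ha⟩
  have h₁ : 1 < G.dist v a' :=
    hconn.one_lt_dist_of_ne_of_not_adj (hv a' ha').ne.symm fun h => (hv a' ha').2 h.symm
  have h₂ : G.dist v a ≤ 2 := dist_le (.cons hvu (.cons hua .nil))
  have := distToSet_le_dist (G := G) (v := v) ha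
  omega

end Distance

namespace IsPrivateNbr

variable {V : Type*} {G : SimpleGraph V} {D : Set V} {u v : V}

lemma mem (h : IsPrivateNbr G D u v) : u ∈ D :=
  (h.symm ▸ rfl : u ∈ insert v (G.neighborSet v) ∩ D).2

lemma eq_of_adj (h : IsPrivateNbr G D u v) {s : V} (hs : s ∈ D) (hvs : G.Adj v s) : s = u := by
  have : s ∈ insert v (G.neighborSet v) ∩ D := ⟨.inr hvs, hs⟩
  rwa [h] at this

lemma not_mem (h : IsPrivateNbr G D u v) (hne : v ≠ u) : v ∉ D := fun hv => by
  have : v ∈ insert v (G.neighborSet v) ∩ D := ⟨.inl rfl, hv⟩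
  rw [h] at this
  exact hne this

lemma adj (h : IsPrivateNbr G D u v) (hv : v ∉ D) : G.Adj v u :=
  (h.symm ▸ rfl : u ∈ insert v (G.neighborSet v) ∩ D).1.resolve_left fun hu => hv (hu ▸ h.mem)

end IsPrivateNbr

section Configuration

variable {V : Type*} {G : SimpleGraph V} {C D : Set V} {b₀ x y : V} {k : ℕ}

lemma isIndepSet_of_compl_adj (f : P3kP2 k ↪g G) (hfree : HFree G (P3kP2 (k + 1))) {S : Set V}
    (hS : ∀ v ∈ S, ∀ z, Gᶜ.Adj (f z) v) : G.IsIndepSet S :=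
  fun _ hu _ hw _ huw => hfree.false (P3kP2.nonempty_embedding_succ f huw (hS _ hu) (hS _ hw)).some

lemma noInducedMatching_of_isPrivateNbr (hfree : HFree G (P3kP2 k)) (hC : G.IsIndepSet C)
    (hD : G.IsIndepSet D) (hx : x ∈ C \ D) (hy : y ∈ C \ D) (hxy : x ≠ y)
    (hpx : IsPrivateNbr G D b₀ x) (hpy : IsPrivateNbr G D b₀ y) :
    NoInducedMatching (fun c => G.neighborSet c ∩ D) {c | c ∈ C \ D ∧ ¬ G.Adj c b₀} k := by
  intro c s hc hcs
  obtain ⟨hcs, hsD⟩ := hcs.of_inter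
  have hsb (i) : s i ≠ b₀ := fun h => (hc i).2 (h ▸ hcs.mem i)
  obtain ⟨f⟩ := P3kP2.nonempty_embedding_of_bipartite (hC.mono Set.sdiff_subset) hD
    Set.disjoint_sdiff_left hx hy hpx.mem (fun i => (hc i).1) hsD hxy (hpx.adj hx.2)
    (hpy.adj hy.2) (fun i h => hsb i (hpx.eq_of_adj (hsD i) h))
    (fun i h => hsb i (hpy.eq_of_adj (hsD i) h)) (fun i => (hc i).2) hcs
  exact hfree.false f

lemma noInducedMatchingAtOverlaps_of_isPrivateNbr (hfree : HFree G (P3kP2 (k + 1)))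
    (hC : G.IsIndepSet C) (hD : G.IsIndepSet D) (hx : x ∈ C \ D) (hpx : IsPrivateNbr G D b₀ x) :
    NoInducedMatchingAtOverlaps (fun c => G.neighborSet c ∩ D)
      {c | c ∈ C \ D ∧ ¬ G.Adj c b₀} k := by
  intro c₀ hc₀ c₁ hc₁ hne s₀ hs₀ c s hc hcs
  obtain ⟨hcs, hsU⟩ := hcs.of_inter
  obtain ⟨hcs, hsD⟩ := hcs.of_inter
  have hsb (i) : s i ≠ b₀ := fun h => (hc i).1.2 (h ▸ hcs.mem i)
  have hs₀b : s₀ ≠ b₀ := fun h => hc₀.2 (h ▸ hs₀.1.1)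
  obtain ⟨f⟩ := P3kP2.nonempty_embedding_of_bipartite (hC.mono Set.sdiff_subset) hD
    Set.disjoint_sdiff_left (c := Fin.cons x c) (s := Fin.cons b₀ s) hc₀.1 hc₁.1 hs₀.1.2
    (Fin.forall_fin_succ.2 ⟨hx, fun i => (hc i).1.1⟩) (Fin.forall_fin_succ.2 ⟨hpx.mem, hsD⟩)
    hne hs₀.1.1 hs₀.2.1
    (Fin.forall_fin_succ.2 ⟨hc₀.2, fun i h => hsU i (.inl ⟨h, hsD i⟩)⟩)
    (Fin.forall_fin_succ.2 ⟨hc₁.2, fun i h => hsU i (.inr ⟨h, hsD i⟩)⟩)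
    (Fin.forall_fin_succ.2 ⟨fun h => hs₀b (hpx.eq_of_adj hs₀.1.2 h),
      fun i h => (hc i).2 ⟨h, hs₀.1.2⟩⟩)
    (hcs.cons (hpx.adj hx.2) (fun i h => hsb i (hpx.eq_of_adj (hsD i) h)) fun i => (hc i).1.2)
  exact hfree.false f

end Configuration

section Replacement

variable {V : Type*} {G : SimpleGraph V}

lemma isDomSet_sdiff_union (hconn : G.Connected) {A D Y : Set V} {b₀ : V} (hD : IsDomSet G D)
    (hb₀ : b₀ ∈ D)
    (hY : ∀ c ∈ {c | c ∈ {v | distToSet G v A = 2} \ D ∧ ¬ G.Adj c b₀},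
      (G.neighborSet c ∩ D).Nonempty → ∃ y ∈ Y, y ∈ G.neighborSet c ∩ D) :
    IsDomSet G (D \ (({v | distToSet G v A = 1} ∩ D) \ {b₀}) ∪ A ∪ Y) := by
  set S := ({v | distToSet G v A = 1} ∩ D) \ {b₀}
  have hS (v) (hv : v ∈ S) : ∃ a ∈ D \ S ∪ A ∪ Y, G.Adj a v :=
    let ⟨a, ha, hva⟩ := exists_adj_of_distToSet_eq_one hv.1.1
    ⟨a, .inl (.inr ha), hva.symm⟩
  intro v hv
  by_cases hvD : v ∈ D
  · exact hS v (by_contra fun hvS => hv (.inl (.inl ⟨hvD, hvS⟩)))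
  obtain ⟨u, huD, huv⟩ := hD v hvD
  by_cases huS : u ∉ S
  · exact ⟨u, .inl (.inl ⟨huD, huS⟩), huv⟩
  obtain ⟨a, ha, hua⟩ := exists_adj_of_distToSet_eq_one (not_not.1 huS).1.1
  by_cases hvA : ∃ a ∈ A, G.Adj a v
  · obtain ⟨a', ha', h⟩ := hvA
    exact ⟨a', .inl (.inr ha'), h⟩
  push Not at hvA
  have hv₂ : distToSet G v A = 2 :=
    distToSet_eq_two hconn (fun a' ha' => ⟨fun h => hv (.inl (.inr (h ▸ ha'))), hvA a' ha'⟩)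
      huv.symm hua ha
  by_cases hvb : G.Adj v b₀
  · exact ⟨b₀, .inl (.inl ⟨hb₀, fun h => h.2 rfl⟩), hvb.symm⟩
  obtain ⟨y, hy, hvy, -⟩ := hY v ⟨⟨hv₂, hvD⟩, hvb⟩ ⟨u, huv.symm, huD⟩
  exact ⟨y, .inr hy, hvy.symm⟩

lemma ncard_lt_of_isDomSet_sdiff_union [Finite V] {A D S Y : Set V} (hD : IsMinDomSet G D)
    (hstable : ∀ D, IsMinDomSet G D → IsStable G D) (hSD : S ⊆ D) (hA : ¬ IsStable G A)
    (hdom : IsDomSet G (D \ S ∪ A ∪ Y)) : S.ncard < A.ncard + Y.ncard := by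
  have hlt : D.ncard < (D \ S ∪ A ∪ Y).ncard := by
    by_contra! hle
    exact hA ((hstable _ ⟨hdom, fun D' hD' => hle.trans (hD.2 D' hD')⟩).mono
      (Set.subset_union_right.trans Set.subset_union_left))
  have := Set.ncard_union_le (D \ S ∪ A) Y
  have := Set.ncard_union_le (D \ S) A
  have := Set.ncard_sdiff hSD
  have := Set.ncard_le_ncard hSD
  omega

end Replacement

theorem stmt7_general
    {V : Type*} [Fintype V] (k : ℕ) (G : SimpleGraph V)
    (hconn : G.Connected) (hfree : HFree G (P3kP2 k))
    (A : Set V) (hA : ∃ f : P3kP2 (k-1) ↪g G, Set.range f = A)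
    (B C : Set V) (hB : B = {v | distToSet G v A = 1})
    (hC : C = {v | distToSet G v A = 2})
    (hstable : ∀ D : Set V, IsMinDomSet G D → IsStable G D)
    (D : Set V) (hD : IsMinDomSet G D)
    (b₀ : V) (hb₀ : b₀ ∈ B ∩ D)
    (hpriv : ∃ x y : V, x ∈ C ∧ y ∈ C ∧ x ≠ y ∧
      IsPrivateNbr G D b₀ x ∧ IsPrivateNbr G D b₀ y) :
    (B ∩ D).ncard ≤ k * A.ncard := by
  obtain _ | n := k
  -- `0 - 1 = 0` in `ℕ`, so `A` itself induces the forbidden `P₃`.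
  · exact (hfree.false hA.choose).elim
  obtain ⟨f, rfl⟩ : ∃ f : P3kP2 n ↪g G, Set.range f = A := hA
  subst hB hC
  obtain ⟨x, y, hxC, hyC, hxy, hpx, hpy⟩ := hpriv
  have hCind : G.IsIndepSet {v | distToSet G v (Set.range f) = 2} :=
    isIndepSet_of_compl_adj f hfree fun v hv z =>
      compl_adj_of_one_lt_distToSet (by rw [hv]; omega) (Set.mem_range_self z)
  have hb₀C : b₀ ∉ {v | distToSet G v (Set.range f) = 2} := fun h =>
    absurd ((Eq.symm h).trans hb₀.1) (by decide)
  have hxD : x ∉ D := hpx.not_mem (ne_of_mem_of_not_mem hxC hb₀C)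
  have hyD : y ∉ D := hpy.not_mem (ne_of_mem_of_not_mem hyC hb₀C)
  obtain ⟨Y, hYcard, hY⟩ := exists_finset_hitting n
    (noInducedMatching_of_isPrivateNbr hfree hCind (hstable D hD) ⟨hxC, hxD⟩ ⟨hyC, hyD⟩ hxy hpx hpy)
    (noInducedMatchingAtOverlaps_of_isPrivateNbr hfree hCind (hstable D hD) ⟨hxC, hxD⟩ hpx)
  have hlt := ncard_lt_of_isDomSet_sdiff_union hD hstable
    (Set.sdiff_subset.trans Set.inter_subset_right) (P3kP2.not_isStable_range f)
    (isDomSet_sdiff_union hconn hD.1 hb₀.2 hY)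
  rw [Set.ncard_coe_finset, P3kP2.ncard_range] at hlt
  rw [P3kP2.ncard_range]
  have := Set.ncard_sdiff_singleton_add_one hb₀
  nlinarith

theorem stmt7
    {V : Type*} [Fintype V] (k : ℕ) (hk : 1 ≤ k) (G : SimpleGraph V)
    (hconn : G.Connected) (hfree : HFree G (P3kP2 k))
    (A : Set V) (hA : ∃ f : P3kP2 (k-1) ↪g G, Set.range f = A)
    (B C : Set V) (hB : B = {v | distToSet G v A = 1})
    (hC : C = {v | distToSet G v A = 2})
    (hstable : ∀ D : Set V, IsMinDomSet G D → IsStable G D)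
    (D : Set V) (hD : IsMinDomSet G D)
    (b₀ : V) (hb₀ : b₀ ∈ B ∩ D)
    (hpriv : ∃ x y : V, x ∈ C ∧ y ∈ C ∧ x ≠ y ∧
      IsPrivateNbr G D b₀ x ∧ IsPrivateNbr G D b₀ y) :
    (B ∩ D).ncard ≤ k * A.ncard :=
  stmt7_general k G hconn hfree A hA B C hB hC hstable D hD b₀ hb₀ hpriv
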